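/- Let k be a commutative ring and n ≥ d ≥ 0. Let X = k^n. In the category of strict polynomial bifunctors (contravariant in the first variable, covariant in the second), there is an epimorphism θ : Γ^{2d}(Hom((X,X), (−,−))) ↠ Γ^d(gl), where gl(V,W) = Hom_k(V,W), such that under evaluation at (X,X), θ sends Id_{(X,X)}^{⊗2d} to Id_X^{⊗d} ∈ Γ^d(Hom(X,X)). -/

import Mathlib

/-!
STATEMENT 12: Let `k` be a commutative ring and `n ≥ d ≥ 0`, `X = k^n`.  In the category of
strict polynomial bifunctors (contravariant in the first variable, covariant in the second)
there is an epimorphism `θ : P^{2d}_{(X,X)} = Γ^{2d}(Hom(−,X) ⊕ Hom(X,−)) ↠ Γ^d(gl)` where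
`gl(V,W) = Hom_k(V,W)`, such that evaluating at `(X,X)`, `θ` sends `Id_{(X,X)}^{⊗2d}` to
`Id_X^{⊗d}`.

We formalize the bifunctor map `θ` as a family of linear maps
`θ V W : (Hom(V,X) × Hom(X,W))^{⊗(d+d)} → Hom(V,W)^{⊗ d}` which is natural in `V` (contravariantly)
and `W` (covariantly); "θ is an epimorphism Γ^{2d}(…) ↠ Γ^d(gl)" is expressed by the condition
that for every pair of finitely generated projective modules `V, W`, the image of the divided
power submodule `Γ^{2d}` under `θ V W` is exactly `Γ^d(Hom(V,W))`. -/

open TensorProduct PiTensorProduct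

variable (k : Type) [CommRing k]

/-- Permutation action on a tensor power. -/
noncomputable def permTensorMap (d : ℕ) (V : Type) [AddCommGroup V] [Module k V]
    (σ : Equiv.Perm (Fin d)) :
    (⨂[k] (_ : Fin d), V) →ₗ[k] (⨂[k] (_ : Fin d), V) :=
  (PiTensorProduct.reindex k (fun _ : Fin d => V) σ).toLinearMap

/-- `Γ^d(V) = (V^{⊗d})^{S_d}`. -/
noncomputable def dividedPower (d : ℕ) (V : Type) [AddCommGroup V] [Module k V] :
    Submodule k (⨂[k] (_ : Fin d), V) :=
  ⨅ σ : Equiv.Perm (Fin d), LinearMap.ker (permTensorMap k d V σ - LinearMap.id)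

/-- The splitting `U^{⊗(a+b)} ≅ U^{⊗a} ⊗ U^{⊗b}`. -/
noncomputable def splitTensorPow (a b : ℕ) (U : Type) [AddCommGroup U] [Module k U] :
    (⨂[k] (_ : Fin (a + b)), U) ≃ₗ[k] ((⨂[k] (_ : Fin a), U) ⊗[k] (⨂[k] (_ : Fin b), U)) :=
  ((PiTensorProduct.tmulEquiv k U).trans
    (PiTensorProduct.reindex k (fun _ : Fin a ⊕ Fin b => U) finSumFinEquiv)).symm

/-- Functorial (`d`-th tensor power) action of a linear map. -/
noncomputable def powMap (d : ℕ) {U U' : Type} [AddCommGroup U] [Module k U]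
    [AddCommGroup U'] [Module k U'] (f : U →ₗ[k] U') :
    (⨂[k] (_ : Fin d), U) →ₗ[k] (⨂[k] (_ : Fin d), U') :=
  PiTensorProduct.map (fun _ => f)

/-- The map `j_d : U^{⊗d} ⊗ V^{⊗d} → (U ⊗ V)^{⊗d}`. -/
noncomputable def diagTensor (d : ℕ) (U V : Type) [AddCommGroup U] [Module k U]
    [AddCommGroup V] [Module k V] :
    ((⨂[k] (_ : Fin d), U) ⊗[k] (⨂[k] (_ : Fin d), V)) →ₗ[k] ⨂[k] (_ : Fin d), (U ⊗[k] V) :=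
  TensorProduct.lift (PiTensorProduct.map₂ (fun _ => TensorProduct.mk k U V))

/-- Composition `Hom(V,X) ⊗ Hom(X,W) → Hom(V,W)`, `(a, b) ↦ b ∘ a`. -/
noncomputable def compTensor (V X W : Type) [AddCommGroup V] [Module k V]
    [AddCommGroup X] [Module k X] [AddCommGroup W] [Module k W] :
    ((V →ₗ[k] X) ⊗[k] (X →ₗ[k] W)) →ₗ[k] (V →ₗ[k] W) :=
  TensorProduct.lift (LinearMap.llcomp k V X W).flip

/-!
`θ` commutes with `S_d` acting simultaneously on both halves of `Fin (d + d)`, so it maps `Γ^{2d}`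
into `Γ^d`. For the converse inclusion take `V`, `W` free first. Then `Γ^d(Hom(V,W))` is spanned by
the orbit sums of words `m₁ ⋯ m_d` in the rank one basis maps. Such a word has at most
`d ≤ rank X` distinct letters, so each distinct letter `s` factors as `b s ∘ a s` through its own
basis line of `X`, with `b s' ∘ a s = 0` for `s ≠ s'`. The orbit sum of the word
`(a m₁, 0) ⋯ (a m_d, 0) (0, b m₁) ⋯ (0, b m_d)` lies in `Γ^{2d}`, and `θ` sends it to the orbit sum
of `m`: every rearrangement that does not keep the `i`-th letters of the two halves matched
contributes a factor `b s' ∘ a s = 0`, or one with a zero component. Finitely generated projective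
`V`, `W` are retracts of free ones, and naturality of `θ` transports the surjectivity.
-/

/-- The paper's `θ`: the exponential projection onto `Hom(V,X)^{⊗d} ⊗ Hom(X,W)^{⊗d}` (the first `d`
factors go left, the last `d` right), followed by composing the `i`-th factors. -/
noncomputable def theta (d : ℕ) (X V W : Type) [AddCommGroup X] [Module k X]
    [AddCommGroup V] [Module k V] [AddCommGroup W] [Module k W] :
    (⨂[k] (_ : Fin (d + d)), ((V →ₗ[k] X) × (X →ₗ[k] W)))
      →ₗ[k] ⨂[k] (_ : Fin d), (V →ₗ[k] W) :=
  powMap k d (compTensor k V X W) ∘ₗ diagTensor k d _ _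
    ∘ₗ (TensorProduct.map (powMap k d (LinearMap.fst k _ _)) (powMap k d (LinearMap.snd k _ _)))
    ∘ₗ (splitTensorPow k d d _).toLinearMap

section TensorPower

variable {d : ℕ} {U U' : Type} [AddCommGroup U] [Module k U] [AddCommGroup U'] [Module k U']

lemma permTensorMap_tprod (σ : Equiv.Perm (Fin d)) (z : Fin d → U) :
    permTensorMap k d U σ (tprod k z) = tprod k (z ∘ σ.symm) :=
  PiTensorProduct.reindex_tprod _ _

lemma mem_dividedPower_iff {x : ⨂[k] (_ : Fin d), U} :
    x ∈ dividedPower k d U ↔ ∀ σ, permTensorMap k d U σ x = x := by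
  simp [dividedPower, sub_eq_zero]

lemma powMap_comp_permTensorMap (f : U →ₗ[k] U') (σ : Equiv.Perm (Fin d)) :
    powMap k d f ∘ₗ permTensorMap k d U σ = permTensorMap k d U' σ ∘ₗ powMap k d f := by
  ext z
  simp [powMap, permTensorMap_tprod, Function.comp_def]

lemma map_powMap_dividedPower_le (f : U →ₗ[k] U') :
    (dividedPower k d U).map (powMap k d f) ≤ dividedPower k d U' := by
  rintro _ ⟨x, hx, rfl⟩
  rw [SetLike.mem_coe, mem_dividedPower_iff] at hx
  rw [mem_dividedPower_iff]
  intro σ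
  rw [← LinearMap.comp_apply, ← powMap_comp_permTensorMap, LinearMap.comp_apply, hx]

lemma dividedPower_le_map_powMap_of_comp_eq_id (f : U →ₗ[k] U') (g : U' →ₗ[k] U)
    (hfg : f ∘ₗ g = LinearMap.id) :
    dividedPower k d U' ≤ (dividedPower k d U).map (powMap k d f) := by
  intro y hy
  refine ⟨powMap k d g y, map_powMap_dividedPower_le k g ⟨y, hy, rfl⟩, ?_⟩
  rw [← LinearMap.comp_apply, powMap, powMap, ← PiTensorProduct.map_comp, hfg,
    PiTensorProduct.map_id, LinearMap.id_apply]

lemma splitTensorPow_tprod {a b : ℕ} (z : Fin (a + b) → U) :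
    splitTensorPow k a b U (tprod k z) =
      tprod k (z ∘ Fin.castAdd b) ⊗ₜ[k] tprod k (z ∘ Fin.natAdd a) := by
  rw [splitTensorPow, LinearEquiv.symm_apply_eq, LinearEquiv.trans_apply,
    PiTensorProduct.tmulEquiv_apply, PiTensorProduct.reindex_tprod]
  congr 1
  funext i
  refine Fin.addCases (fun j => ?_) (fun j => ?_) i <;> simp

end TensorPower

section BlockPerm

variable {d : ℕ}

def blockPerm (d : ℕ) (σ : Equiv.Perm (Fin d)) : Equiv.Perm (Fin (d + d)) :=
  finSumFinEquiv.permCongr (σ.sumCongr σ)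

lemma blockPerm_castAdd (σ : Equiv.Perm (Fin d)) (i : Fin d) :
    blockPerm d σ (Fin.castAdd d i) = Fin.castAdd d (σ i) := by
  simp only [blockPerm, Equiv.permCongr_apply, finSumFinEquiv_symm_apply_castAdd,
    Equiv.Perm.sumCongr_apply, Sum.map_inl, finSumFinEquiv_apply_left]

lemma blockPerm_natAdd (σ : Equiv.Perm (Fin d)) (i : Fin d) :
    blockPerm d σ (Fin.natAdd d i) = Fin.natAdd d (σ i) := by
  simp only [blockPerm, Equiv.permCongr_apply, finSumFinEquiv_symm_apply_natAdd,
    Equiv.Perm.sumCongr_apply, Sum.map_inr, finSumFinEquiv_apply_right]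

lemma blockPerm_symm (σ : Equiv.Perm (Fin d)) : (blockPerm d σ).symm = blockPerm d σ.symm := by
  ext x
  simp [blockPerm, Equiv.permCongr_def]

end BlockPerm

section Theta

variable (d : ℕ) (X : Type) [AddCommGroup X] [Module k X] {V W : Type}
  [AddCommGroup V] [Module k V] [AddCommGroup W] [Module k W]

lemma theta_tprod (z : Fin (d + d) → (V →ₗ[k] X) × (X →ₗ[k] W)) :
    theta k d X V W (tprod k z) =
      tprod k (fun i => (z (Fin.natAdd d i)).2 ∘ₗ (z (Fin.castAdd d i)).1) := by
  simp only [theta, LinearMap.comp_apply, LinearEquiv.coe_coe, splitTensorPow_tprod,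
    TensorProduct.map_tmul, powMap, PiTensorProduct.map_tprod, diagTensor,
    TensorProduct.lift.tmul, PiTensorProduct.map₂_tprod_tprod, compTensor]
  rfl

lemma theta_natural {V' W' : Type} [AddCommGroup V'] [Module k V'] [AddCommGroup W'] [Module k W']
    (f : V' →ₗ[k] V) (g : W →ₗ[k] W') :
    theta k d X V' W' ∘ₗ powMap k (d + d)
        (LinearMap.prodMap (LinearMap.lcomp k X f) (LinearMap.llcomp k X W W' g))
      = powMap k d (LinearMap.llcomp k V' W W' g ∘ₗ LinearMap.lcomp k W f) ∘ₗ theta k d X V W := by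
  ext z
  simp only [LinearMap.compMultilinearMap_apply, LinearMap.comp_apply, powMap,
    PiTensorProduct.map_tprod, theta_tprod]
  rfl

lemma theta_comp_permTensorMap_blockPerm (σ : Equiv.Perm (Fin d)) :
    theta k d X V W ∘ₗ permTensorMap k (d + d) _ (blockPerm d σ)
      = permTensorMap k d _ σ ∘ₗ theta k d X V W := by
  ext z
  simp only [LinearMap.compMultilinearMap_apply, LinearMap.comp_apply, permTensorMap_tprod,
    theta_tprod, blockPerm_symm, Function.comp_apply]
  congr 1
  funext i
  rw [blockPerm_castAdd, blockPerm_natAdd]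
  rfl

lemma map_theta_dividedPower_le :
    (dividedPower k (d + d) ((V →ₗ[k] X) × (X →ₗ[k] W))).map (theta k d X V W)
      ≤ dividedPower k d (V →ₗ[k] W) := by
  rintro _ ⟨x, hx, rfl⟩
  rw [SetLike.mem_coe, mem_dividedPower_iff] at hx
  rw [mem_dividedPower_iff]
  intro σ
  rw [← LinearMap.comp_apply, ← theta_comp_permTensorMap_blockPerm, LinearMap.comp_apply, hx]

end Theta

section OrbitSum

variable {n : ℕ} {T M : Type} [DecidableEq T] [AddCommGroup M] [Module k M]

def wordOrbit (u : Fin n → T) : Finset (Fin n → T) :=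
  Finset.univ.image fun σ : Equiv.Perm (Fin n) => u ∘ σ

lemma mem_wordOrbit {u w : Fin n → T} : w ∈ wordOrbit u ↔ ∃ σ : Equiv.Perm (Fin n), u ∘ σ = w := by
  simp [wordOrbit]

lemma mem_wordOrbit_self (u : Fin n → T) : u ∈ wordOrbit u :=
  mem_wordOrbit.2 ⟨1, rfl⟩

lemma wordOrbit_eq_of_mem {u w : Fin n → T} (h : w ∈ wordOrbit u) : wordOrbit w = wordOrbit u := by
  obtain ⟨σ, rfl⟩ := mem_wordOrbit.1 h
  ext v
  simp only [mem_wordOrbit]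
  constructor
  · rintro ⟨τ, rfl⟩
    exact ⟨σ * τ, rfl⟩
  · rintro ⟨τ, rfl⟩
    exact ⟨σ⁻¹ * τ, by ext; simp⟩

noncomputable def orbitSum (f : T → M) (u : Fin n → T) : ⨂[k] (_ : Fin n), M :=
  ∑ w ∈ wordOrbit u, tprod k (f ∘ w)

lemma permTensorMap_orbitSum (f : T → M) (u : Fin n → T) (σ : Equiv.Perm (Fin n)) :
    permTensorMap k n M σ (orbitSum k f u) = orbitSum k f u := by
  rw [orbitSum, map_sum]
  simp only [permTensorMap_tprod]
  refine Finset.sum_nbij' (· ∘ σ.symm) (· ∘ σ) ?_ ?_ ?_ ?_ ?_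
  · intro w hw
    obtain ⟨τ, rfl⟩ := mem_wordOrbit.1 hw
    exact mem_wordOrbit.2 ⟨τ * σ.symm, rfl⟩
  · intro w hw
    obtain ⟨τ, rfl⟩ := mem_wordOrbit.1 hw
    exact mem_wordOrbit.2 ⟨τ * σ, rfl⟩
  · intro w _
    ext; simp
  · intro w _
    ext; simp
  · intro w _
    rfl

lemma orbitSum_mem_dividedPower (f : T → M) (u : Fin n → T) :
    orbitSum k f u ∈ dividedPower k n M :=
  (mem_dividedPower_iff k).2 (permTensorMap_orbitSum k f u)

lemma orbitSum_comp_of_injective {T' : Type} [DecidableEq T'] (f : T' → M) {g : T → T'}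
    (hg : Function.Injective g) (u : Fin n → T) :
    orbitSum k f (g ∘ u) = orbitSum k (f ∘ g) u := by
  have : wordOrbit (g ∘ u) = (wordOrbit u).image (g ∘ ·) := by
    simp only [wordOrbit, Finset.image_image]
    rfl
  rw [orbitSum, orbitSum, this, Finset.sum_image fun _ _ _ _ h => hg.comp_left h]
  rfl

lemma repr_permTensorMap {ι : Type} [Fintype ι] (b : Module.Basis ι k M) (σ : Equiv.Perm (Fin n))
    (x : ⨂[k] (_ : Fin n), M) (m : Fin n → ι) :
    (Basis.piTensorProduct fun _ => b).repr (permTensorMap k n M σ x) m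
      = (Basis.piTensorProduct fun _ => b).repr x (m ∘ σ) := by
  induction x using PiTensorProduct.induction_on with
  | smul_tprod r z =>
    simp only [map_smul, permTensorMap_tprod, Finsupp.smul_apply,
      Basis.piTensorProduct_repr_tprod_apply, Function.comp_apply]
    congr 1
    exact Fintype.prod_equiv σ.symm _ _ (by simp)
  | add x y hx hy => simp [hx, hy]

lemma dividedPower_le_span_orbitSum {ι : Type} [Fintype ι] [DecidableEq ι]
    (b : Module.Basis ι k M) :
    dividedPower k n M ≤ Submodule.span k (Set.range (orbitSum k b)) := by
  intro x hx
  set B := Basis.piTensorProduct fun _ : Fin n => b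
  have hinv : ∀ m (σ : Equiv.Perm (Fin n)), B.repr x (m ∘ σ) = B.repr x m := fun m σ => by
    rw [← repr_permTensorMap, (mem_dividedPower_iff k).1 hx]
  have horbit : ∀ m, ∑ w ∈ wordOrbit m, B.repr x w • B w = B.repr x m • orbitSum k b m := by
    intro m
    rw [orbitSum, Finset.smul_sum]
    refine Finset.sum_congr rfl fun w hw => ?_
    obtain ⟨σ, rfl⟩ := mem_wordOrbit.1 hw
    rw [hinv, Basis.piTensorProduct_apply]
    rfl
  rw [← B.sum_repr x, ← Finset.sum_image' (f := fun O => ∑ w ∈ O, B.repr x w • B w)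
    (g := wordOrbit) _]
  · refine Submodule.sum_mem _ fun O hO => ?_
    obtain ⟨m, -, rfl⟩ := Finset.mem_image.1 hO
    rw [horbit]
    exact Submodule.smul_mem _ _ (Submodule.subset_span ⟨m, rfl⟩)
  · intro m _
    congr 1
    ext w
    simp only [Finset.mem_filter, Finset.mem_univ, true_and]
    exact ⟨wordOrbit_eq_of_mem, fun h => h ▸ mem_wordOrbit_self w⟩

end OrbitSum

section PairedWord

variable {d : ℕ} {S : Type}

def pairedWord (u : Fin d → S) : Fin (d + d) → S ⊕ S :=
  Fin.append (Sum.inl ∘ u) (Sum.inr ∘ u)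

lemma pairedWord_castAdd (u : Fin d → S) (i : Fin d) :
    pairedWord u (Fin.castAdd d i) = Sum.inl (u i) :=
  Fin.append_left _ _ i

lemma pairedWord_natAdd (u : Fin d → S) (i : Fin d) :
    pairedWord u (Fin.natAdd d i) = Sum.inr (u i) :=
  Fin.append_right _ _ i

lemma pairedWord_injective : Function.Injective (pairedWord : (Fin d → S) → Fin (d + d) → S ⊕ S) :=
  fun u v h => funext fun i => Sum.inl_injective <| by
    rw [← pairedWord_castAdd, ← pairedWord_castAdd, h]

lemma pairedWord_comp_perm (u : Fin d → S) (σ : Equiv.Perm (Fin d)) :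
    pairedWord (u ∘ σ) = pairedWord u ∘ blockPerm d σ := by
  funext x
  refine Fin.addCases (fun i => ?_) (fun i => ?_) x
  · rw [Function.comp_apply, blockPerm_castAdd, pairedWord_castAdd, pairedWord_castAdd]
    rfl
  · rw [Function.comp_apply, blockPerm_natAdd, pairedWord_natAdd, pairedWord_natAdd]
    rfl

lemma exists_castAdd_of_pairedWord_eq_inl {u : Fin d → S} {x : Fin (d + d)} {p : S}
    (h : pairedWord u x = Sum.inl p) : ∃ j, x = Fin.castAdd d j ∧ u j = p := by
  induction x using Fin.addCases with
  | left j => exact ⟨j, rfl, Sum.inl_injective ((pairedWord_castAdd u j).symm.trans h)⟩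
  | right j => exact absurd ((pairedWord_natAdd u j).symm.trans h) Sum.inr_ne_inl

lemma exists_perm_of_pairedWord_comp_matched [DecidableEq S] (u : Fin d → S)
    (τ : Equiv.Perm (Fin (d + d)))
    (h : ∀ i, ∃ p, pairedWord u (τ (Fin.castAdd d i)) = Sum.inl p ∧
      pairedWord u (τ (Fin.natAdd d i)) = Sum.inr p) :
    pairedWord u ∘ τ ∈ (wordOrbit u).image pairedWord := by
  choose p hp using h
  choose j hj hjp using fun i => exists_castAdd_of_pairedWord_eq_inl (hp i).1
  have hinj : Function.Injective j := fun a b hab =>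
    Fin.castAdd_injective d d (τ.injective (by rw [hj, hj, hab]))
  let σ := Equiv.ofBijective j hinj.bijective_of_finite
  refine Finset.mem_image.2 ⟨u ∘ σ, mem_wordOrbit.2 ⟨σ, rfl⟩, funext fun x => ?_⟩
  induction x using Fin.addCases with
  | left i => exact (pairedWord_castAdd _ i).trans ((congrArg _ (hjp i)).trans (hp i).1.symm)
  | right i => exact (pairedWord_natAdd _ i).trans ((congrArg _ (hjp i)).trans (hp i).2.symm)

end PairedWord

section Letters

variable {d : ℕ} {X V W : Type} [AddCommGroup X] [Module k X]
  [AddCommGroup V] [Module k V] [AddCommGroup W] [Module k W] {S : Type}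

def splitLetters (a : S → V →ₗ[k] X) (b : S → X →ₗ[k] W) : S ⊕ S → (V →ₗ[k] X) × (X →ₗ[k] W) :=
  Sum.elim (fun s => (a s, 0)) (fun s => (0, b s))

variable {a : S → V →ₗ[k] X} {b : S → X →ₗ[k] W}

lemma splitLetters_comp_eq_zero (hab : ∀ s s', s ≠ s' → b s' ∘ₗ a s = 0) {x y : S ⊕ S}
    (h : ¬∃ p, x = Sum.inl p ∧ y = Sum.inr p) :
    (splitLetters k a b y).2 ∘ₗ (splitLetters k a b x).1 = 0 := by
  rcases x with s | s
  · rcases y with s' | s'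
    · exact LinearMap.zero_comp _
    · exact hab s s' fun hs => h ⟨s, rfl, hs ▸ rfl⟩
  · exact LinearMap.comp_zero _

lemma theta_tprod_splitLetters_pairedWord (v : Fin d → S) :
    theta k d X V W (tprod k (splitLetters k a b ∘ pairedWord v)) =
      tprod k fun i => b (v i) ∘ₗ a (v i) := by
  rw [theta_tprod]
  congr 1
  funext i
  simp only [Function.comp_apply, pairedWord_castAdd, pairedWord_natAdd]
  rfl

lemma theta_orbitSum_pairedWord [DecidableEq S] (hab : ∀ s s', s ≠ s' → b s' ∘ₗ a s = 0)
    (u : Fin d → S) :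
    theta k d X V W (orbitSum k (splitLetters k a b) (pairedWord u)) =
      orbitSum k (fun s => b s ∘ₗ a s) u := by
  have hsub : (wordOrbit u).image pairedWord ⊆ wordOrbit (pairedWord u) := by
    intro w hw
    obtain ⟨v, hv, rfl⟩ := Finset.mem_image.1 hw
    obtain ⟨σ, rfl⟩ := mem_wordOrbit.1 hv
    exact mem_wordOrbit.2 ⟨blockPerm d σ, (pairedWord_comp_perm u σ).symm⟩
  have hvanish : ∀ w ∈ wordOrbit (pairedWord u), w ∉ (wordOrbit u).image pairedWord →
      theta k d X V W (tprod k (splitLetters k a b ∘ w)) = 0 := by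
    intro w hw hnot
    obtain ⟨τ, rfl⟩ := mem_wordOrbit.1 hw
    by_contra hne
    refine hnot (exists_perm_of_pairedWord_comp_matched u τ fun i => ?_)
    by_contra hi
    exact hne ((theta_tprod k d X _).trans
      (MultilinearMap.map_coord_zero _ i (splitLetters_comp_eq_zero k hab hi)))
  rw [orbitSum, map_sum, ← Finset.sum_subset hsub hvanish,
    Finset.sum_image fun _ _ _ _ h => pairedWord_injective h, orbitSum]
  exact Finset.sum_congr rfl fun v _ => theta_tprod_splitLetters_pairedWord k v

end Letters

lemma LinearMap.smulRight_comp_smulRight {R V X W : Type*} [CommSemiring R]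
    [AddCommMonoid V] [Module R V] [AddCommMonoid X] [Module R X] [AddCommMonoid W] [Module R W]
    (φ : X →ₗ[R] R) (w : W) (ψ : V →ₗ[R] R) (x : X) :
    φ.smulRight w ∘ₗ ψ.smulRight x = φ x • ψ.smulRight w := by
  ext v
  simp [smul_smul, mul_comm]

lemma Module.Basis.linearMap_apply_eq_smulRight {R ιV ιW V W : Type*} [CommSemiring R]
    [Fintype ιV] [DecidableEq ιV] [Fintype ιW] [AddCommMonoid V] [Module R V] [AddCommMonoid W]
    [Module R W] (bV : Module.Basis ιV R V) (bW : Module.Basis ιW R W) (t : ιW) (s : ιV) :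
    bV.linearMap bW (t, s) = (bV.coord s).smulRight (bW t) :=
  bV.ext fun j => by simp [Module.Basis.linearMap_apply_apply, Finsupp.single_apply, eq_comm]

section Surjectivity

variable (d : ℕ) (X : Type) [AddCommGroup X] [Module k X] [Module.Free k X] [Module.Finite k X]

lemma dividedPower_le_map_theta_of_free (hX : d ≤ Module.finrank k X) (V W : Type)
    [AddCommGroup V] [Module k V] [AddCommGroup W] [Module k W]
    [Module.Free k V] [Module.Finite k V] [Module.Free k W] [Module.Finite k W] :
    dividedPower k d (V →ₗ[k] W) ≤
      (dividedPower k (d + d) ((V →ₗ[k] X) × (X →ₗ[k] W))).map (theta k d X V W) := by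
  classical
  -- `finrank` is the cardinality of a basis only over a nontrivial ring
  rcases subsingleton_or_nontrivial k with hk | hk
  · have := Module.subsingleton k (⨂[k] (_ : Fin d), (V →ₗ[k] W))
    exact fun y _ => ⟨0, zero_mem _, Subsingleton.elim _ _⟩
  let bV := Module.Free.chooseBasis k V
  let bW := Module.Free.chooseBasis k W
  let bX := Module.Free.chooseBasis k X
  refine (dividedPower_le_span_orbitSum k (bV.linearMap bW)).trans (Submodule.span_le.2 ?_)
  rintro _ ⟨m, rfl⟩
  obtain ⟨e⟩ : Nonempty (Set.range m ↪ Module.Free.ChooseBasisIndex k X) :=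
    Function.Embedding.nonempty_of_card_le <| (Fintype.card_range_le m).trans <| by
      rwa [Fintype.card_fin, ← Module.finrank_eq_card_chooseBasisIndex]
  let a : Set.range m → V →ₗ[k] X := fun s => (bV.coord s.1.2).smulRight (bX (e s))
  let b : Set.range m → X →ₗ[k] W := fun s => (bX.coord (e s)).smulRight (bW s.1.1)
  have hba : ∀ s s', b s' ∘ₗ a s = if s = s' then bV.linearMap bW s else 0 := by
    intro s s'
    simp only [a, b, LinearMap.smulRight_comp_smulRight, Module.Basis.coord_apply,
      Module.Basis.repr_self, Finsupp.single_apply, e.injective.eq_iff]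
    split_ifs with h
    · subst h
      rw [one_smul, Module.Basis.linearMap_apply_eq_smulRight]
    · exact zero_smul _ _
  have hm : orbitSum k (bV.linearMap bW) m =
      orbitSum k (fun s => b s ∘ₗ a s) (Set.rangeFactorization m) := by
    refine (orbitSum_comp_of_injective k _ Subtype.val_injective
      (Set.rangeFactorization m)).trans ?_
    congr 1
    funext s
    rw [hba, if_pos rfl]
    rfl
  rw [hm, ← theta_orbitSum_pairedWord k fun s s' h => (hba s s').trans (if_neg h)]
  exact Submodule.mem_map_of_mem (orbitSum_mem_dividedPower k _ _)

lemma dividedPower_le_map_theta (hX : d ≤ Module.finrank k X) (V W : Type)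
    [AddCommGroup V] [Module k V] [AddCommGroup W] [Module k W]
    [Module.Projective k V] [Module.Finite k V] [Module.Projective k W] [Module.Finite k W] :
    dividedPower k d (V →ₗ[k] W) ≤
      (dividedPower k (d + d) ((V →ₗ[k] X) × (X →ₗ[k] W))).map (theta k d X V W) := by
  obtain ⟨nV, πV, ιV, -, -, hV⟩ := Module.Finite.exists_comp_eq_id_of_projective k V
  obtain ⟨nW, πW, ιW, -, -, hW⟩ := Module.Finite.exists_comp_eq_id_of_projective k W
  let r := LinearMap.llcomp k V _ W πW ∘ₗ LinearMap.lcomp k _ ιV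
  let s := LinearMap.llcomp k (Fin nV → k) W _ ιW ∘ₗ LinearMap.lcomp k W πV
  have hrs : r ∘ₗ s = LinearMap.id := by
    ext φ v
    simp only [r, s, LinearMap.comp_apply, LinearMap.llcomp_apply, LinearMap.lcomp_apply,
      LinearMap.id_apply]
    rw [← LinearMap.comp_apply πW, hW, ← LinearMap.comp_apply πV, hV]
    rfl
  calc dividedPower k d (V →ₗ[k] W)
      ≤ (dividedPower k d _).map (powMap k d r) :=
        dividedPower_le_map_powMap_of_comp_eq_id k r s hrs
    _ ≤ ((dividedPower k (d + d) _).map (theta k d X _ _)).map (powMap k d r) :=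
        Submodule.map_mono (dividedPower_le_map_theta_of_free k d X hX _ _)
    _ = ((dividedPower k (d + d) _).map (powMap k (d + d)
          ((LinearMap.lcomp k X ιV).prodMap (LinearMap.llcomp k X _ W πW)))).map
            (theta k d X V W) := by
        rw [← Submodule.map_comp, ← Submodule.map_comp, theta_natural]
    _ ≤ (dividedPower k (d + d) _).map (theta k d X V W) :=
        Submodule.map_mono (map_powMap_dividedPower_le k _)

end Surjectivity

/-- For `X` finitely generated free of rank `≥ d` there is a family of maps
`θ V W : ((Hom(V,X) × Hom(X,W))^{⊗(d+d)}) → Hom(V,W)^{⊗d}`, natural in `(V,W)` (contravariant in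
`V`, covariant in `W`), which restricts to an epimorphism
`Γ^{2d}(Hom(−,X) ⊕ Hom(X,−)) ↠ Γ^d(gl)` on every pair of finitely generated projective modules,
and which sends `Id_{(X,X)}^{⊗2d}` to `Id_X^{⊗d}` upon evaluation at `(X,X)`. -/
theorem statement12 (d : ℕ) (X : Type) [AddCommGroup X] [Module k X]
    [Module.Free k X] [Module.Finite k X] (hX : d ≤ Module.finrank k X) :
    ∃ θ : ∀ (V W : Type) [AddCommGroup V] [Module k V] [AddCommGroup W] [Module k W],
        (⨂[k] (_ : Fin (d + d)), ((V →ₗ[k] X) × (X →ₗ[k] W)))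
          →ₗ[k] ⨂[k] (_ : Fin d), (V →ₗ[k] W),
      -- naturality: contravariant in the first variable, covariant in the second
      (∀ (V V' W W' : Type) [AddCommGroup V] [Module k V] [AddCommGroup V'] [Module k V']
          [AddCommGroup W] [Module k W] [AddCommGroup W'] [Module k W']
          (f : V' →ₗ[k] V) (g : W →ₗ[k] W'),
        (θ V' W') ∘ₗ powMap k (d + d)
            (LinearMap.prodMap (LinearMap.lcomp k X f) (LinearMap.llcomp k X W W' g))
          = powMap k d ((LinearMap.llcomp k V' W W' g) ∘ₗ (LinearMap.lcomp k W f)) ∘ₗ (θ V W))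
      -- θ is an epimorphism of the divided powers: on each finitely generated projective pair
      -- the image of Γ^{2d} is exactly Γ^d(Hom(V,W))
      ∧ (∀ (V W : Type) [AddCommGroup V] [Module k V] [AddCommGroup W] [Module k W]
          [Module.Projective k V] [Module.Finite k V] [Module.Projective k W] [Module.Finite k W],
          Submodule.map (θ V W) (dividedPower k (d + d) ((V →ₗ[k] X) × (X →ₗ[k] W)))
            = dividedPower k d (V →ₗ[k] W))
      -- evaluation at (X,X) sends Id^{⊗2d} to Id^{⊗d}
      ∧ θ X X (PiTensorProduct.tprod k
            (fun _ : Fin (d + d) => ((LinearMap.id : X →ₗ[k] X), (LinearMap.id : X →ₗ[k] X))))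
          = PiTensorProduct.tprod k (fun _ : Fin d => (LinearMap.id : X →ₗ[k] X)) := by
  refine ⟨fun V W _ _ _ _ => theta k d X V W,
    fun V V' W W' _ _ _ _ _ _ _ _ f g => theta_natural k d X f g,
    fun V W _ _ _ _ _ _ _ _ => le_antisymm (map_theta_dividedPower_le k d X)
      (dividedPower_le_map_theta k d X hX V W), ?_⟩
  rw [theta_tprod]
  rfl
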